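/- Let K > 0, m > 0, P > 0, γ > 0, D_alt > 0, r_a > 0, and λ > 0. Define ᾱ(k,i,P,γ) = (−1)^{k−i} (m/(K+m))^m · ((m)_i/(i!)²) · (K/(K+m))^i · ((1+K)/P)^{k+1} · γ^{k+1}/((k−i)!(k+1)). Then the OMA outage probability, obtained by averaging the Rician shadowed power CDF at threshold γ·w² over the BPP distance density, satisfies ∫_{√(D_alt²+λ²)}^{√(D_alt²+λ²+r_a²)} (2w/r_a²) · [∫₀^{γw²} f_X(x) dx] dw = ∑_{k=0}^∞ ∑_{i=0}^{k} ᾱ(k,i,P,γ) · Ḡ(λ,k), where the outer series converges. -/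

import Mathlib

/-- Pochhammer symbol (ascending factorial) `(m)_k = m (m+1) ⋯ (m+k-1)`. -/
noncomputable def poch (m : ℝ) (k : ℕ) : ℝ := ∏ j ∈ Finset.range k, (m + j)

/-- Confluent hypergeometric function `₁F₁(m, 1; z) = ∑ (m)_n zⁿ / (n!)²`. -/
noncomputable def F11 (m z : ℝ) : ℝ := ∑' n : ℕ, poch m n * z ^ n / (Nat.factorial n : ℝ) ^ 2

/-- Rician shadowed power PDF with Rician factor `K`, shadowing parameter `m`,
and normalized power `P`. -/
noncomputable def fX (K m P x : ℝ) : ℝ :=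
  Real.rpow (m / (K + m)) m * ((1 + K) / P) * Real.exp (-(1 + K) * x / P) *
    F11 m (K * (1 + K) * x / ((K + m) * P))

/-- Series coefficient `ᾱ(k,i,P,γ)` of the Rician shadowed power CDF. -/
noncomputable def alphaBar (K m : ℝ) (k i : ℕ) (P γ : ℝ) : ℝ :=
  (-1 : ℝ) ^ (k - i) * Real.rpow (m / (K + m)) m * (poch m i / (Nat.factorial i : ℝ) ^ 2) *
    (K / (K + m)) ^ i * ((1 + K) / P) ^ (k + 1) * γ ^ (k + 1) /
    ((Nat.factorial (k - i) : ℝ) * ((k : ℝ) + 1))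

/-- `Ḡ(λ,k)`, the `(2(k+1))`-th moment of the BPP distance distribution. -/
noncomputable def Gbar (Dalt ra lam : ℝ) (k : ℕ) : ℝ :=
  ((Dalt ^ 2 + lam ^ 2 + ra ^ 2) ^ (k + 2) - (Dalt ^ 2 + lam ^ 2) ^ (k + 2)) /
    (ra ^ 2 * (k + 2))

/-!
The exponential factor and `₁F₁` are both entire power series (the `₁F₁` coefficients are
dominated by exponential ones because `|(m)_n| ≤ (|m| + 1)ⁿ n!`), so `f_X` is an entire power
series whose coefficients are their Cauchy product. Since the power series converges absolutely
at the endpoint of largest modulus, it dominates the series on the whole interval, and dominated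
convergence allows integrating term by term: first over `[0, γw²]`, which gives the CDF as a
power series in `γw²`, then against `2w/r_a²`, which turns `w^{2k+3}` into `Ḡ(λ,k)`. The `k`-th
Cauchy coefficient times `γ^{k+1}/(k+1)` is exactly `∑ᵢ ᾱ(k,i,P,γ)`.
-/

open Finset MeasureTheory Filter
open scoped Nat

section CauchyProduct

variable {R : Type*} [NormedCommRing R]

theorem sum_range_mul_pow_mul_mul_pow (a b : ℕ → R) (x : R) (n : ℕ) :
    ∑ i ∈ range (n + 1), a i * x ^ i * (b (n - i) * x ^ (n - i)) =
      (∑ i ∈ range (n + 1), a i * b (n - i)) * x ^ n := by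
  rw [sum_mul]
  refine sum_congr rfl fun i hi => ?_
  rw [← pow_mul_pow_sub x (Nat.le_of_lt_succ (mem_range.mp hi))]
  ring

variable {a b : ℕ → R} {x : R}

theorem summable_norm_cauchy_mul_pow (ha : Summable fun n => ‖a n * x ^ n‖)
    (hb : Summable fun n => ‖b n * x ^ n‖) :
    Summable fun n => ‖(∑ i ∈ range (n + 1), a i * b (n - i)) * x ^ n‖ := by
  simpa only [sum_range_mul_pow_mul_mul_pow] using
    summable_norm_sum_mul_range_of_summable_norm ha hb

theorem hasSum_cauchy_mul_pow [CompleteSpace R] (ha : Summable fun n => ‖a n * x ^ n‖)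
    (hb : Summable fun n => ‖b n * x ^ n‖) :
    HasSum (fun n => (∑ i ∈ range (n + 1), a i * b (n - i)) * x ^ n)
      ((∑' n, a n * x ^ n) * ∑' n, b n * x ^ n) := by
  simpa only [sum_range_mul_pow_mul_mul_pow] using hasSum_sum_range_mul_of_summable_norm ha hb

end CauchyProduct

theorem abs_le_abs_of_mem_uIcc {a b x : ℝ} (hab : |a| ≤ |b|) (hx : x ∈ Set.uIcc a b) :
    |x| ≤ |b| := by
  have ha := abs_le.mp hab
  rw [abs_le]
  rcases Set.mem_uIcc.mp hx with h | h <;>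
    constructor <;> linarith [h.1, h.2, le_abs_self b, neg_abs_le b]

theorem hasSum_intervalIntegral_mul_pow {c : ℕ → ℝ} {p : ℕ → ℕ} {f : ℝ → ℝ} {a b : ℝ}
    (hab : |a| ≤ |b|) (hc : Summable fun k => ‖c k * b ^ p k‖)
    (hf : ∀ x ∈ Set.uIoc a b, HasSum (fun k => c k * x ^ p k) (f x)) :
    HasSum (fun k => ∫ x in a..b, c k * x ^ p k) (∫ x in a..b, f x) := by
  refine intervalIntegral.hasSum_integral_of_dominated_convergence (fun k _ => ‖c k * b ^ p k‖)
    (fun k => by fun_prop) (fun k => ae_of_all _ fun x hx => ?_)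
    (ae_of_all _ fun _ _ => hc) intervalIntegrable_const (ae_of_all _ hf)
  have hxb := abs_le_abs_of_mem_uIcc hab (Set.uIoc_subset_uIcc hx)
  simp only [norm_mul, norm_pow, Real.norm_eq_abs]
  gcongr

theorem abs_poch_le (m : ℝ) (n : ℕ) : |poch m n| ≤ (|m| + 1) ^ n * n ! := by
  induction n with
  | zero => simp [poch]
  | succ n ih =>
    have hstep : |m + n| ≤ (|m| + 1) * (n + 1) := by
      have := abs_add_le m n
      rw [Nat.abs_cast] at this
      nlinarith [abs_nonneg m, (n.cast_nonneg : (0 : ℝ) ≤ n)]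
    rw [poch, prod_range_succ, ← poch, abs_mul, Nat.factorial_succ, pow_succ]
    push_cast
    calc |poch m n| * |m + n| ≤ (|m| + 1) ^ n * n ! * ((|m| + 1) * (n + 1)) :=
          mul_le_mul ih hstep (abs_nonneg _) (by positivity)
      _ = _ := by ring

theorem summable_norm_poch_mul_pow_div_sq (m z : ℝ) :
    Summable fun n => ‖poch m n * z ^ n / (n ! : ℝ) ^ 2‖ := by
  refine (Real.summable_pow_div_factorial ((|m| + 1) * |z|)).of_norm_bounded fun n => ?_
  have hfac : (0 : ℝ) < n ! := by positivity
  rw [norm_norm, norm_div, norm_mul, norm_pow, Real.norm_eq_abs, Real.norm_eq_abs,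
    Real.norm_eq_abs, abs_of_pos (by positivity : (0 : ℝ) < (n ! : ℝ) ^ 2), mul_pow,
    div_le_div_iff₀ (by positivity) hfac]
  calc |poch m n| * |z| ^ n * n ! ≤ (|m| + 1) ^ n * n ! * |z| ^ n * n ! := by
        gcongr; exact abs_poch_le m n
    _ = _ := by ring

noncomputable def scaledF11Coeff (m q : ℝ) (n : ℕ) : ℝ := poch m n * q ^ n / (n ! : ℝ) ^ 2

theorem summable_norm_scaledF11Coeff_mul_pow (m q x : ℝ) :
    Summable fun n => ‖scaledF11Coeff m q n * x ^ n‖ := by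
  refine (summable_norm_poch_mul_pow_div_sq m (q * x)).congr fun n => ?_
  rw [scaledF11Coeff, mul_pow]
  ring_nf

theorem hasSum_scaledF11Coeff_mul_pow (m q x : ℝ) :
    HasSum (fun n => scaledF11Coeff m q n * x ^ n) (F11 m (q * x)) := by
  have h : HasSum (fun n => poch m n * (q * x) ^ n / (n ! : ℝ) ^ 2) (F11 m (q * x)) :=
    (summable_norm_poch_mul_pow_div_sq m (q * x)).of_norm.hasSum
  exact h.congr_fun fun n => by rw [scaledF11Coeff, mul_pow]; ring

theorem summable_norm_pow_div_factorial_mul_pow (y x : ℝ) :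
    Summable fun n => ‖y ^ n / n ! * x ^ n‖ := by
  refine (Real.summable_pow_div_factorial |y * x|).congr fun n => ?_
  simp only [Real.norm_eq_abs, abs_mul, abs_div, abs_pow, Nat.abs_cast, mul_pow]
  ring

theorem hasSum_pow_div_factorial_mul_pow (y x : ℝ) :
    HasSum (fun n => y ^ n / n ! * x ^ n) (Real.exp (y * x)) := by
  have h := NormedSpace.expSeries_div_hasSum_exp (y * x)
  rw [← Real.exp_eq_exp_ℝ] at h
  exact h.congr_fun fun n => by ring

section RicianShadowed

variable (K m P : ℝ)

noncomputable def fXCoeff (k : ℕ) : ℝ :=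
  Real.rpow (m / (K + m)) m * ((1 + K) / P) *
    ∑ i ∈ range (k + 1), scaledF11Coeff m (K * (1 + K) / ((K + m) * P)) i *
      ((-((1 + K) / P)) ^ (k - i) / ((k - i)! : ℝ))

theorem hasSum_fX (x : ℝ) : HasSum (fun k => fXCoeff K m P k * x ^ k) (fX K m P x) := by
  have h := (hasSum_cauchy_mul_pow
    (summable_norm_scaledF11Coeff_mul_pow m (K * (1 + K) / ((K + m) * P)) x)
    (summable_norm_pow_div_factorial_mul_pow (-((1 + K) / P)) x)).mul_left
      (Real.rpow (m / (K + m)) m * ((1 + K) / P))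
  rw [(hasSum_scaledF11Coeff_mul_pow _ _ x).tsum_eq,
    (hasSum_pow_div_factorial_mul_pow _ x).tsum_eq] at h
  have hfX : fX K m P x = Real.rpow (m / (K + m)) m * ((1 + K) / P) *
      (F11 m (K * (1 + K) / ((K + m) * P) * x) * Real.exp (-((1 + K) / P) * x)) := by
    rw [fX, show -(1 + K) * x / P = -((1 + K) / P) * x by ring,
      show K * (1 + K) * x / ((K + m) * P) = K * (1 + K) / ((K + m) * P) * x by ring]
    ring
  rw [hfX]
  exact h.congr_fun fun k => by rw [fXCoeff, mul_assoc]

theorem summable_norm_fXCoeff_mul_pow (x : ℝ) :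
    Summable fun k => ‖fXCoeff K m P k * x ^ k‖ := by
  have h := (summable_norm_cauchy_mul_pow
    (summable_norm_scaledF11Coeff_mul_pow m (K * (1 + K) / ((K + m) * P)) x)
    (summable_norm_pow_div_factorial_mul_pow (-((1 + K) / P)) x)).mul_left
      ‖Real.rpow (m / (K + m)) m * ((1 + K) / P)‖
  simpa only [fXCoeff, ← norm_mul, mul_assoc] using h

theorem summable_norm_fXCoeff_mul_pow_succ_div (x : ℝ) :
    Summable fun k => ‖fXCoeff K m P k * (x ^ (k + 1) / (k + 1))‖ := by
  refine ((summable_norm_fXCoeff_mul_pow K m P x).mul_left |x|).of_norm_bounded fun k => ?_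
  have hk : (1 : ℝ) ≤ k + 1 := by linarith [(k.cast_nonneg : (0 : ℝ) ≤ k)]
  simp only [norm_mul, norm_div, norm_pow, Real.norm_eq_abs, abs_abs,
    abs_of_pos (zero_lt_one.trans_le hk), pow_succ]
  calc |fXCoeff K m P k| * (|x| ^ k * |x| / (k + 1)) ≤ |fXCoeff K m P k| * (|x| ^ k * |x|) := by
        gcongr; exact div_le_self (by positivity) hk
    _ = _ := by ring

theorem hasSum_intervalIntegral_fX (t : ℝ) :
    HasSum (fun k => fXCoeff K m P k * (t ^ (k + 1) / (k + 1))) (∫ x in 0..t, fX K m P x) := by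
  have h := hasSum_intervalIntegral_mul_pow (a := 0) (b := t) (p := id) (by simp)
    (summable_norm_fXCoeff_mul_pow K m P t) fun x _ => hasSum_fX K m P x
  simpa [intervalIntegral.integral_const_mul, integral_pow] using h

theorem sum_alphaBar_eq_fXCoeff_mul (k : ℕ) (γ : ℝ) :
    ∑ i ∈ range (k + 1), alphaBar K m k i P γ = fXCoeff K m P k * (γ ^ (k + 1) / (k + 1)) := by
  rw [fXCoeff, mul_sum, sum_mul]
  refine sum_congr rfl fun i hi => ?_
  obtain ⟨j, rfl⟩ := Nat.exists_eq_add_of_le (Nat.le_of_lt_succ (mem_range.mp hi))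
  rw [alphaBar, scaledF11Coeff, Nat.add_sub_cancel_left, ← div_mul_div_comm K (K + m) (1 + K) P,
    mul_pow]
  generalize (1 + K) / P = b
  rw [neg_pow b]
  field_simp
  ring

end RicianShadowed

theorem integral_two_mul_pow_sqrt {A B : ℝ} (hA : 0 ≤ A) (hB : 0 ≤ B) (k : ℕ) :
    ∫ w in √A..√B, 2 * w ^ (2 * k + 3) = (B ^ (k + 2) - A ^ (k + 2)) / (k + 2) := by
  have hsq : ∀ {C : ℝ}, 0 ≤ C → √C ^ (2 * k + 3 + 1) = C ^ (k + 2) := fun hC => by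
    rw [show 2 * k + 3 + 1 = 2 * (k + 2) by ring, pow_mul, Real.sq_sqrt hC]
  rw [intervalIntegral.integral_const_mul, integral_pow, hsq hA, hsq hB]
  push_cast
  field_simp
  ring

theorem oma_outage_series_general (K m P γ Dalt ra lam : ℝ) :
    Summable (fun k : ℕ => ∑ i ∈ Finset.range (k + 1),
      alphaBar K m k i P γ * Gbar Dalt ra lam k) ∧
    (∫ w in Real.sqrt (Dalt ^ 2 + lam ^ 2)..Real.sqrt (Dalt ^ 2 + lam ^ 2 + ra ^ 2),
        (2 * w / ra ^ 2) * ∫ x in (0 : ℝ)..(γ * w ^ 2), fX K m P x) =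
      ∑' k : ℕ, ∑ i ∈ Finset.range (k + 1),
        alphaBar K m k i P γ * Gbar Dalt ra lam k := by
  set A := Dalt ^ 2 + lam ^ 2
  set B := Dalt ^ 2 + lam ^ 2 + ra ^ 2
  set d : ℕ → ℝ := fun k => fXCoeff K m P k * (γ ^ (k + 1) / (k + 1))
  have hterm : ∀ (w : ℝ) (k : ℕ), 2 * w / ra ^ 2 * (fXCoeff K m P k * ((γ * w ^ 2) ^ (k + 1) /
      (k + 1))) = 2 / ra ^ 2 * d k * w ^ (2 * k + 3) := fun w k => by ring
  have hAB : |√A| ≤ |√B| := by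
    rw [abs_of_nonneg (Real.sqrt_nonneg _), abs_of_nonneg (Real.sqrt_nonneg _)]
    exact Real.sqrt_le_sqrt (by simp only [A, B]; linarith [sq_nonneg ra])
  have hsum := hasSum_intervalIntegral_mul_pow (p := fun k => 2 * k + 3) hAB
    (((summable_norm_fXCoeff_mul_pow_succ_div K m P (γ * √B ^ 2)).mul_left
      ‖2 * √B / ra ^ 2‖).congr fun k => by rw [← norm_mul, hterm])
    fun w _ => ((hasSum_intervalIntegral_fX K m P (γ * w ^ 2)).mul_left
      (2 * w / ra ^ 2)).congr_fun fun k => (hterm w k).symm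
  have hGbar : ∀ k, ∫ w in √A..√B, 2 / ra ^ 2 * d k * w ^ (2 * k + 3) =
      ∑ i ∈ range (k + 1), alphaBar K m k i P γ * Gbar Dalt ra lam k := fun k => by
    calc ∫ w in √A..√B, 2 / ra ^ 2 * d k * w ^ (2 * k + 3)
        = d k / ra ^ 2 * ∫ w in √A..√B, 2 * w ^ (2 * k + 3) := by
          rw [← intervalIntegral.integral_const_mul]
          congr 1
          ext w
          ring
      _ = _ := by
          rw [integral_two_mul_pow_sqrt (by positivity) (by positivity), ← sum_mul,
            sum_alphaBar_eq_fXCoeff_mul, Gbar, ← div_div]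
          ring
  simp only [hGbar] at hsum
  exact ⟨hsum.summable, hsum.tsum_eq.symm⟩

theorem oma_outage_series (K m P γ Dalt ra lam : ℝ)
    (hK : 0 < K) (hm : 0 < m) (hP : 0 < P) (hγ : 0 < γ)
    (hD : 0 < Dalt) (hra : 0 < ra) (hlam : 0 < lam) :
    Summable (fun k : ℕ => ∑ i ∈ Finset.range (k + 1),
      alphaBar K m k i P γ * Gbar Dalt ra lam k) ∧
    (∫ w in Real.sqrt (Dalt ^ 2 + lam ^ 2)..Real.sqrt (Dalt ^ 2 + lam ^ 2 + ra ^ 2),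
        (2 * w / ra ^ 2) * ∫ x in (0 : ℝ)..(γ * w ^ 2), fX K m P x) =
      ∑' k : ℕ, ∑ i ∈ Finset.range (k + 1),
        alphaBar K m k i P γ * Gbar Dalt ra lam k :=
  oma_outage_series_general K m P γ Dalt ra lam
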